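/- For every natural number n ≥ 3, the subgroup A_n is a characteristic subgroup of G_n, i.e., α(A_n) = A_n for every automorphism α of G_n. -/

import Mathlib

/-- The defining relations of the combinatorial Hantzsche-Wendt group `G_n`:
`x_i⁻¹ x_j² x_i = x_j⁻²` for all `i ≠ j`, written as relators. -/
def HWrels (n : ℕ) : Set (FreeGroup (Fin n)) :=
  {r | ∃ i j : Fin n, i ≠ j ∧
    r = (FreeGroup.of i)⁻¹ * FreeGroup.of j ^ 2 * FreeGroup.of i * FreeGroup.of j ^ 2}

/-- The combinatorial Hantzsche-Wendt group `G_n`. -/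
abbrev HW (n : ℕ) : Type := PresentedGroup (HWrels n)

/-- The generators `x_1, …, x_n` of `G_n`. -/
def x (n : ℕ) (i : Fin n) : HW n := PresentedGroup.of i

/-- For an `n × n` integer matrix `𝔞 = [a_ij]`, the element
`a_i = (x_1²)^{a_i1} ⋯ (x_n²)^{a_in}` of `A_n ≤ G_n`. -/
def aElt (n : ℕ) (𝔞 : Matrix (Fin n) (Fin n) ℤ) (i : Fin n) : HW n :=
  ((List.finRange n).map fun j => (x n j ^ 2) ^ 𝔞 i j).prod

/-- The subgroup `A_n = ⟨x_1², …, x_n²⟩` of `G_n`. -/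
def A (n : ℕ) : Subgroup (HW n) := Subgroup.closure (Set.range fun i => x n i ^ 2)

/-!
An element `g` of `A_n` commutes with all of its conjugates, since `A_n` is normal and abelian.
Conversely, suppose `g` commutes with all of its conjugates and look at its image in
`W_n = C₂ * ⋯ * C₂`. If that image were a nontrivial reduced word `w` running from letter `i`
to letter `j`, pick a third letter `k` (this is where `n ≥ 3` is needed) with generator `t`:
then `w · twt` and `twt · w` are reduced words beginning with `i` and with `k` respectively, so
they differ. Hence `g` lies in the kernel of `G_n → W_n`, which is `A_n`. This characterizes
`A_n` in purely group-theoretic terms, so every automorphism preserves it.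
-/

namespace Monoid.CoprodI

variable {ι : Type*}

theorem NeWord.fst_eq_of_prod_eq {M : ι → Type*} [∀ i, Monoid (M i)] {i j k l : ι}
    (w₁ : NeWord M i j) (w₂ : NeWord M k l) (h : w₁.prod = w₂.prod) : i = k := by
  classical
  have hword : w₁.toWord = w₂.toWord := Word.equiv.symm.injective h
  have hhead := congrArg (fun w : Word M => w.toList.head?) hword
  simp only [NeWord.toWord, NeWord.toList_head?, Option.some.injEq] at hhead
  exact congrArg Sigma.fst hhead

theorem exists_neWord_prod_eq {M : ι → Type*} [∀ i, Monoid (M i)] {g : CoprodI M}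
    (hg : g ≠ 1) : ∃ (i j : ι) (w : NeWord M i j), w.prod = g := by
  classical
  have hw : Word.equiv g ≠ Word.empty := fun h => hg (by
    rw [← Word.equiv.symm_apply_apply g, h]; exact Word.prod_empty)
  obtain ⟨i, j, w, hw'⟩ := NeWord.of_word _ hw
  exact ⟨i, j, w, by rw [NeWord.prod, hw']; exact Word.equiv.symm_apply_apply g⟩

theorem eq_one_of_forall_commute_conj {G : ι → Type*} [∀ i, Group (G i)]
    [∀ i, Nontrivial (G i)] (hι : ∀ i j : ι, ∃ k, k ≠ i ∧ k ≠ j) {g : CoprodI G}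
    (hg : ∀ h, Commute g (h * g * h⁻¹)) : g = 1 := by
  by_contra hne
  obtain ⟨i, j, w, rfl⟩ := exists_neWord_prod_eq hne
  obtain ⟨k, hki, hkj⟩ := hι i j
  obtain ⟨t, ht⟩ := exists_ne (1 : G k)
  let s := NeWord.singleton t ht
  let s' := NeWord.singleton t⁻¹ (inv_ne_one.mpr ht)
  let w₁ := ((w.append hkj.symm s).append hki w).append hkj.symm s'
  let w₂ := ((s.append hki w).append hkj.symm s').append hki w
  have hprod : w₁.prod = w₂.prod := by
    simpa [w₁, w₂, s, s', NeWord.append_prod, NeWord.prod_singleton, mul_assoc]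
      using (hg (of t)).eq
  exact hki (NeWord.fst_eq_of_prod_eq w₁ w₂ hprod).symm

end Monoid.CoprodI

theorem Fintype.exists_ne_ne_of_three_le_card {ι : Type*} [Fintype ι]
    (hι : 3 ≤ Fintype.card ι) (i j : ι) : ∃ k, k ≠ i ∧ k ≠ j := by
  classical
  obtain ⟨k, -, hk⟩ := Finset.exists_mem_notMem_of_card_lt_card (s := {i, j}) (t := .univ)
    (Finset.card_le_two.trans_lt (by rwa [Finset.card_univ]))
  simp only [Finset.mem_insert, Finset.mem_singleton, not_or] at hk
  exact ⟨k, hk⟩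

theorem MulEquiv.forall_commute_conj_iff {G H : Type*} [Group G] [Group H] (e : G ≃* H)
    (g : G) : (∀ h, Commute (e g) (h * e g * h⁻¹)) ↔ ∀ h, Commute g (h * g * h⁻¹) := by
  simp only [e.surjective.forall, ← map_inv, ← map_mul, commute_map_iff e.injective]

theorem Subgroup.normal_closure_of_conj_mem {G : Type*} [Group G] {S T : Set G}
    (hT : closure T = ⊤)
    (hS : ∀ t ∈ T, ∀ s ∈ S, t * s * t⁻¹ ∈ closure S ∧ t⁻¹ * s * t ∈ closure S) :
    (closure S).Normal := by
  have hconj (g : G) (hg : ∀ s ∈ S, g * s * g⁻¹ ∈ closure S) :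
      ∀ a ∈ closure S, g * a * g⁻¹ ∈ closure S := by
    have : (closure S).map (MulAut.conj g).toMonoidHom ≤ closure S := by
      rw [MonoidHom.map_closure, closure_le]
      rintro _ ⟨s, hs, rfl⟩
      exact hg s hs
    exact fun a ha => this ⟨a, ha, rfl⟩
  rw [← normalizer_eq_top_iff, eq_top_iff, ← hT, closure_le]
  intro t ht a
  refine ⟨hconj t (fun s hs => (hS t ht s hs).1) a, fun h => ?_⟩
  simpa [mul_assoc] using hconj t⁻¹ (by simpa using fun s hs => (hS t ht s hs).2) _ h

theorem Additive.zmultiplesHom_ofMul_two_eq_zero {G : Type*} [Group G] {t : G}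
    (ht : t ^ 2 = 1) : zmultiplesHom (Additive G) (ofMul t) 2 = 0 := by
  rw [zmultiplesHom_apply, ← ofMul_zpow, zpow_ofNat, ht, ofMul_one]

def zmodTwoHom {G : Type*} [Group G] (t : G) (ht : t ^ 2 = 1) :
    Multiplicative (ZMod 2) →* G :=
  AddMonoidHom.toMultiplicativeLeft
    (ZMod.lift 2 ⟨_, Additive.zmultiplesHom_ofMul_two_eq_zero ht⟩)

theorem zmodTwoHom_ofAdd_one {G : Type*} [Group G] (t : G) (ht : t ^ 2 = 1) :
    zmodTwoHom t ht (Multiplicative.ofAdd 1) = t := by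
  simpa [zmodTwoHom] using
    congrArg Additive.toMul (ZMod.lift_coe 2 ⟨_, Additive.zmultiplesHom_ofMul_two_eq_zero ht⟩ 1)

namespace HW

variable {n : ℕ}

theorem x_inv_mul_sq_mul {i j : Fin n} (hij : i ≠ j) :
    (x n i)⁻¹ * x n j ^ 2 * x n i = (x n j ^ 2)⁻¹ := by
  rw [← mul_eq_one_iff_eq_inv]
  exact PresentedGroup.one_of_mem (rels := HWrels n) ⟨i, j, hij, rfl⟩

theorem x_mul_sq_mul_inv {i j : Fin n} (hij : i ≠ j) :
    x n i * x n j ^ 2 * (x n i)⁻¹ = (x n j ^ 2)⁻¹ := by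
  have h := congrArg (x n i * ·⁻¹ * (x n i)⁻¹) (x_inv_mul_sq_mul hij)
  simpa [mul_assoc] using h.symm

theorem commute_x_sq (i j : Fin n) : Commute (x n i ^ 2) (x n j ^ 2) := by
  rcases eq_or_ne i j with rfl | hij
  · exact Commute.refl _
  have hconj : x n i ^ 2 * x n j ^ 2 * (x n i ^ 2)⁻¹ = x n j ^ 2 :=
    calc x n i ^ 2 * x n j ^ 2 * (x n i ^ 2)⁻¹
        = x n i * (x n i * x n j ^ 2 * (x n i)⁻¹) * (x n i)⁻¹ := by simp only [sq]; group
      _ = (x n i * x n j ^ 2 * (x n i)⁻¹)⁻¹ := by nth_rw 1 [x_mul_sq_mul_inv hij]; group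
      _ = x n j ^ 2 := by rw [x_mul_sq_mul_inv hij, inv_inv]
  exact mul_inv_eq_iff_eq_mul.mp hconj

theorem x_sq_mem_A (i : Fin n) : x n i ^ 2 ∈ A n :=
  Subgroup.subset_closure ⟨i, rfl⟩

theorem conj_x_sq_mem_A (k j : Fin n) :
    x n k * x n j ^ 2 * (x n k)⁻¹ ∈ A n ∧ (x n k)⁻¹ * x n j ^ 2 * x n k ∈ A n := by
  rcases eq_or_ne k j with rfl | hkj
  · constructor <;> convert x_sq_mem_A k using 1 <;> group
  · rw [x_mul_sq_mul_inv hkj, x_inv_mul_sq_mul hkj]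
    exact ⟨inv_mem (x_sq_mem_A j), inv_mem (x_sq_mem_A j)⟩

instance A_normal : (A n).Normal :=
  Subgroup.normal_closure_of_conj_mem (PresentedGroup.closure_range_of (HWrels n))
    (by rintro _ ⟨k, rfl⟩ _ ⟨j, rfl⟩; exact conj_x_sq_mem_A k j)

instance A_isMulCommutative : IsMulCommutative (A n) :=
  Subgroup.isMulCommutative_closure
    (by rintro _ ⟨i, rfl⟩ _ ⟨j, rfl⟩; exact (commute_x_sq i j).eq)

theorem commute_conj_of_mem_A {g : HW n} (hg : g ∈ A n) (h : HW n) :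
    Commute g (h * g * h⁻¹) :=
  setLike_mul_comm hg ((A_normal).conj_mem g hg h)

abbrev W (n : ℕ) : Type := Monoid.CoprodI fun _ : Fin n => Multiplicative (ZMod 2)

abbrev xbar (i : Fin n) : W n := Monoid.CoprodI.of (i := i) (Multiplicative.ofAdd 1)

theorem xbar_sq (i : Fin n) : xbar i ^ 2 = 1 := by
  rw [← map_pow]
  exact (map_eq_one_iff _ (Monoid.CoprodI.of_injective i)).mpr (by decide)

def toW (n : ℕ) : HW n →* W n :=
  PresentedGroup.toGroup (f := xbar) (by
    rintro _ ⟨i, j, -, rfl⟩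
    simp only [map_mul, map_inv, map_pow, FreeGroup.lift_apply_of, xbar_sq]
    group)

theorem toW_x (i : Fin n) : toW n (x n i) = xbar i :=
  PresentedGroup.toGroup.of _

theorem toW_surjective : Function.Surjective (toW n) := by
  intro w
  induction w using Monoid.CoprodI.induction_on with
  | one => exact ⟨1, map_one _⟩
  | of i m =>
    obtain rfl | rfl : m = 1 ∨ m = Multiplicative.ofAdd 1 := by revert m; decide
    · exact ⟨1, by rw [map_one, map_one]⟩
    · exact ⟨x n i, toW_x i⟩
  | mul a b ha hb =>
    obtain ⟨g, rfl⟩ := ha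
    obtain ⟨h, rfl⟩ := hb
    exact ⟨g * h, map_mul _ _ _⟩

def ofW (n : ℕ) : W n →* HW n ⧸ A n :=
  Monoid.CoprodI.lift fun i =>
    zmodTwoHom (QuotientGroup.mk' (A n) (x n i)) ((QuotientGroup.eq_one_iff _).mpr (x_sq_mem_A i))

theorem ofW_comp_toW : (ofW n).comp (toW n) = QuotientGroup.mk' (A n) :=
  PresentedGroup.ext fun i => by
    change ofW n (toW n (x n i)) = QuotientGroup.mk' (A n) (x n i)
    rw [toW_x, ofW, Monoid.CoprodI.lift_of]
    exact zmodTwoHom_ofAdd_one _ _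

theorem mem_A_of_toW_eq_one {g : HW n} (hg : toW n g = 1) : g ∈ A n := by
  rw [← QuotientGroup.eq_one_iff, ← QuotientGroup.mk'_apply, ← ofW_comp_toW,
    MonoidHom.comp_apply, hg, map_one]

theorem mem_A_iff (hn : 3 ≤ n) {g : HW n} : g ∈ A n ↔ ∀ h, Commute g (h * g * h⁻¹) := by
  refine ⟨commute_conj_of_mem_A, fun hg => mem_A_of_toW_eq_one ?_⟩
  refine Monoid.CoprodI.eq_one_of_forall_commute_conj
    (Fintype.exists_ne_ne_of_three_le_card (by simpa using hn)) fun h => ?_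
  obtain ⟨h, rfl⟩ := toW_surjective h
  simpa using (hg h).map (toW n)

end HW

theorem stmt7 (n : ℕ) (hn : 3 ≤ n) (α : HW n ≃* HW n) :
    (A n).map α.toMonoidHom = A n := by
  ext g
  rw [Subgroup.mem_map_equiv, HW.mem_A_iff hn, HW.mem_A_iff hn]
  exact α.symm.forall_commute_conj_iff g
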